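/- arXiv:1401.3780 — 5 statements merged into one kernel-verified Lean document; each statement's English description precedes it below -/
import Mathlib

section
/- A connected graph G is k-metric dimensional (i.e., k is the largest integer such that G admits a k-metric generator) if and only if k equals the minimum over all pairs of distinct vertices x,y of the cardinality of the set D_G(x,y) = {z ∈ V(G) : d(x,z) ≠ d(y,z)}. -/
open SimpleGraph

/-- `S` is a `k`-metric generator for `G`: every pair of distinct vertices is
distinguished (has different distances) by at least `k` vertices of `S`. -/
def kMetricGen {V : Type*} [Fintype V] (G : SimpleGraph V) (k : ℕ) (S : Set V) : Prop :=
  ∀ u v : V, u ≠ v → ∃ T : Finset V, ↑T ⊆ S ∧ k ≤ T.card ∧ ∀ w ∈ T, G.dist u w ≠ G.dist v w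

/-- `G` is `k`-metric dimensional: `k` is the largest integer admitting a `k`-metric generator. -/
def kMetricDimensional {V : Type*} [Fintype V] (G : SimpleGraph V) (k : ℕ) : Prop :=
  (∃ S : Set V, kMetricGen G k S) ∧ ∀ k' : ℕ, (∃ S : Set V, kMetricGen G k' S) → k' ≤ k

/-- The `k`-metric dimension of `G`. -/
noncomputable def kMetricDim {V : Type*} [Fintype V] (G : SimpleGraph V) (k : ℕ) : ℕ :=
  sInf {m | ∃ S : Finset V, kMetricGen G k ↑S ∧ S.card = m}

/-- A `k`-metric basis: a minimum-cardinality `k`-metric generator. -/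
def kMetricBasis {V : Type*} [Fintype V] (G : SimpleGraph V) (k : ℕ) (B : Finset V) : Prop :=
  kMetricGen G k ↑B ∧ ∀ T : Finset V, kMetricGen G k ↑T → B.card ≤ T.card

/-- Auxiliary relation for the corona product. -/
def coronaRel {V : Type*} {W : V → Type*} (G : SimpleGraph V) (H : ∀ v, SimpleGraph (W v)) :
    (V ⊕ (Σ v, W v)) → (V ⊕ (Σ v, W v)) → Prop
  | Sum.inl a, Sum.inl b => G.Adj a b
  | Sum.inl a, Sum.inr b => a = b.1
  | Sum.inr a, Sum.inr b => ∃ h : a.1 = b.1, (H b.1).Adj (h ▸ a.2) b.2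
  | _, _ => False

/-- The corona product `G ⊙ 𝓗`: one copy of `G`, and each vertex `v` of `G` joined by an
edge to every vertex of its own copy of `H v`. -/
def corona {V : Type*} {W : V → Type*} (G : SimpleGraph V) (H : ∀ v, SimpleGraph (W v)) :
    SimpleGraph (V ⊕ (Σ v, W v)) :=
  SimpleGraph.fromRel (coronaRel G H)

/-- The join `K₁ + H`: a new vertex (`none`) adjacent to every vertex of `H`. -/
def K1join {U : Type*} (H : SimpleGraph U) : SimpleGraph (Option U) :=
  SimpleGraph.fromRel (fun x y => match x, y with
    | none, some _ => True
    | some a, some b => H.Adj a b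
    | _, _ => False)

/-- `𝒞(H) = min_{x ≠ y} |(N(x) △ N(y)) ∪ {x,y}|`. -/
noncomputable def CC {U : Type*} (H : SimpleGraph U) : ℕ :=
  sInf {m | ∃ x y : U, x ≠ y ∧
    (symmDiff (H.neighborSet x) (H.neighborSet y) ∪ {x, y}).ncard = m}

/-- A connected graph `G` is `k`-metric dimensional iff `k` equals the minimum
over all pairs of distinct vertices of `|D_G(x,y)|`. -/
theorem stmt_0 {V : Type*} [Fintype V] [Nontrivial V] (G : SimpleGraph V) (hG : G.Connected)
    (k : ℕ) :
    kMetricDimensional G k ↔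
      k = sInf {m | ∃ x y : V, x ≠ y ∧ {z : V | G.dist x z ≠ G.dist y z}.ncard = m} := by
  classical
  set A := {m | ∃ x y : V, x ≠ y ∧ {z : V | G.dist x z ≠ G.dist y z}.ncard = m} with hA
  have hAne : A.Nonempty := by
    obtain ⟨x, y, hxy⟩ := exists_pair_ne V
    exact ⟨_, x, y, hxy, rfl⟩
  have hgen : kMetricGen G (sInf A) Set.univ := by
    intro u v huv
    refine ⟨Finset.univ.filter (fun z => G.dist u z ≠ G.dist v z), by simp, ?_, ?_⟩
    · have hmem : {z : V | G.dist u z ≠ G.dist v z}.ncard ∈ A := ⟨u, v, huv, rfl⟩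
      have := Nat.sInf_le hmem
      have hcard : {z : V | G.dist u z ≠ G.dist v z}.ncard
          = (Finset.univ.filter (fun z => G.dist u z ≠ G.dist v z)).card := by
        rw [← Set.ncard_coe_finset]
        congr 1
        ext z; simp
      omega
    · intro w hw; simpa using (Finset.mem_filter.mp hw).2
  have hub : ∀ k' : ℕ, (∃ S : Set V, kMetricGen G k' S) → k' ≤ sInf A := by
    rintro k' ⟨S, hS⟩
    refine le_csInf hAne ?_
    rintro b ⟨x, y, hxy, rfl⟩
    obtain ⟨T, -, hcard, hT⟩ := hS x y hxy
    calc k' ≤ T.card := hcard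
      _ = (↑T : Set V).ncard := (Set.ncard_coe_finset T).symm
      _ ≤ _ := Set.ncard_le_ncard (fun z hz => hT z (by simpa using hz))
        (Set.toFinite _)
  constructor
  · rintro ⟨⟨S, hS⟩, hmax⟩
    exact le_antisymm (hub k ⟨S, hS⟩) (hmax _ ⟨Set.univ, hgen⟩)
  · rintro rfl
    exact ⟨⟨Set.univ, hgen⟩, hub⟩
end

section
/- A connected graph G of order n ≥ 2 is 2-metric dimensional if and only if G has twin vertices, i.e., there exist distinct x,y with N(x) = N(y) or N[x] = N[y]. -/
open SimpleGraph

lemma twin_dist_le {V : Type*} {G : SimpleGraph V} (hG : G.Connected) {x y w : V}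
    (h : ∀ a, G.Adj x a → a = y ∨ G.Adj y a) (hw : w ≠ x) :
    G.dist y w ≤ G.dist x w := by
  obtain ⟨p, hp⟩ := hG.exists_walk_length_eq_dist x w
  cases p with
  | nil => exact absurd rfl hw
  | cons h' q =>
    rcases h _ h' with heq | hadj
    · rw [← heq]
      calc G.dist _ w ≤ q.length := G.dist_le q
        _ ≤ _ := by rw [← hp]; simp
    · calc G.dist y w ≤ (SimpleGraph.Walk.cons hadj q).length := G.dist_le _
        _ = _ := by rw [← hp]; simp

lemma dist_ne_zero' {V : Type*} {G : SimpleGraph V} (hG : G.Connected) {u v : V}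
    (h : u ≠ v) : G.dist u v ≠ 0 :=
  SimpleGraph.dist_ne_zero_iff_ne_and_reachable.2 ⟨h, hG u v⟩

/-- helper: an asymmetric neighbor gives a third distinguishing vertex -/
lemma third_dist {V : Type*} {G : SimpleGraph V} (hG : G.Connected) {u v w : V}
    (h1 : G.Adj u w) (h2 : ¬ G.Adj v w) (h3 : w ≠ v) :
    G.dist u w ≠ G.dist v w := by
  rw [SimpleGraph.dist_eq_one_iff_adj.2 h1]
  intro h
  exact h2 (SimpleGraph.dist_eq_one_iff_adj.1 h.symm)

/-- a connected graph of order at least 2 is 2-metric dimensional iff it has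
twin vertices. -/
theorem stmt_1 {V : Type*} [Fintype V] (G : SimpleGraph V) (hG : G.Connected)
    (hn : 2 ≤ Fintype.card V) :
    kMetricDimensional G 2 ↔
      ∃ x y : V, x ≠ y ∧ (G.neighborSet x = G.neighborSet y ∨
        insert x (G.neighborSet x) = insert y (G.neighborSet y)) := by
  classical
  unfold kMetricDimensional kMetricGen
  have hgen2 : ∃ S : Set V, kMetricGen G 2 S := by
    refine ⟨Set.univ, fun u v huv => ⟨{u, v}, by simp, ?_, ?_⟩⟩
    · rw [Finset.card_insert_of_notMem (by simpa using huv), Finset.card_singleton]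
    · intro w hw
      rcases Finset.mem_insert.1 hw with rfl | hw
      · rw [G.dist_self]
        exact (dist_ne_zero' hG (Ne.symm huv)).symm
      · rw [Finset.mem_singleton.1 hw, G.dist_self]
        exact dist_ne_zero' hG huv
  constructor
  · rintro ⟨-, hmax⟩
    by_contra hno
    push_neg at hno
    -- no twins: build a 3-metric generator
    have : ∃ S : Set V, kMetricGen G 3 S := by
      refine ⟨Set.univ, fun u v huv => ?_⟩
      obtain ⟨hne1, hne2⟩ := hno u v huv
      -- find w adjacent to exactly one of u, v, with w ∉ {u,v}
      have key : ∃ w, w ≠ u ∧ w ≠ v ∧ G.dist u w ≠ G.dist v w := by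
        by_cases hadj : G.Adj u v
        · -- closed neighborhoods differ
          have : ∃ w, (w ∈ insert u (G.neighborSet u) ∧ w ∉ insert v (G.neighborSet v)) ∨
              (w ∈ insert v (G.neighborSet v) ∧ w ∉ insert u (G.neighborSet u)) := by
            by_contra hc
            push_neg at hc
            exact hne2 (Set.ext fun w => by
              have := hc w; tauto)
          obtain ⟨w, hw | hw⟩ := this
          · obtain ⟨hw1, hw2⟩ := hw
            simp only [Set.mem_insert_iff, SimpleGraph.mem_neighborSet, not_or] at hw1 hw2
            obtain ⟨hwv, hvw⟩ := hw2
            have huw : G.Adj u w := by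
              rcases hw1 with rfl | h
              · exact absurd hadj.symm hvw
              · exact h
            exact ⟨w, (G.ne_of_adj huw).symm, hwv, third_dist hG huw hvw hwv⟩
          · obtain ⟨hw1, hw2⟩ := hw
            simp only [Set.mem_insert_iff, SimpleGraph.mem_neighborSet, not_or] at hw1 hw2
            obtain ⟨hwu, huw⟩ := hw2
            have hvw : G.Adj v w := by
              rcases hw1 with rfl | h
              · exact absurd hadj huw
              · exact h
            exact ⟨w, hwu, (G.ne_of_adj hvw).symm,
              fun h => (third_dist hG hvw huw hwu) h.symm⟩
        · -- open neighborhoods differ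
          have : ∃ w, (G.Adj u w ∧ ¬ G.Adj v w) ∨ (G.Adj v w ∧ ¬ G.Adj u w) := by
            by_contra hc
            push_neg at hc
            exact hne1 (Set.ext fun w => by
              have := hc w; simp only [SimpleGraph.mem_neighborSet]; tauto)
          obtain ⟨w, ⟨h1, h2⟩ | ⟨h1, h2⟩⟩ := this
          · have hwv : w ≠ v := fun h => hadj (h ▸ h1)
            exact ⟨w, (G.ne_of_adj h1).symm, hwv, third_dist hG h1 h2 hwv⟩
          · have hwu : w ≠ u := fun h => hadj ((h ▸ h1).symm)
            exact ⟨w, hwu, (G.ne_of_adj h1).symm,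
              fun h => (third_dist hG h1 h2 hwu) h.symm⟩
      obtain ⟨w, hwu, hwv, hwd⟩ := key
      refine ⟨{u, v, w}, by simp, ?_, ?_⟩
      · rw [Finset.card_insert_of_notMem (by simp [huv, Ne.symm hwu]),
          Finset.card_insert_of_notMem (by simp [Ne.symm hwv]), Finset.card_singleton]
      · intro z hz
        simp only [Finset.mem_insert, Finset.mem_singleton] at hz
        rcases hz with rfl | rfl | rfl
        · rw [G.dist_self]; exact (dist_ne_zero' hG (Ne.symm huv)).symm
        · rw [G.dist_self]; exact dist_ne_zero' hG huv
        · exact hwd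
    exact absurd (hmax 3 this) (by norm_num)
  · rintro ⟨x, y, hxy, htwin⟩
    refine ⟨hgen2, fun k' ⟨S, hS⟩ => ?_⟩
    obtain ⟨T, -, hcard, hdist⟩ := hS x y hxy
    -- every w ∈ T is x or y
    have hT : T ⊆ {x, y} := by
      intro w hw
      simp only [Finset.mem_insert, Finset.mem_singleton]
      by_contra hc
      push_neg at hc
      obtain ⟨hwx, hwy⟩ := hc
      have hfwd : ∀ a, G.Adj x a → a = y ∨ G.Adj y a := by
        intro a ha
        rcases htwin with h | h
        · exact Or.inr (h ▸ ha : a ∈ G.neighborSet y)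
        · have : a ∈ insert y (G.neighborSet y) := h ▸ Set.mem_insert_iff.2 (Or.inr ha)
          simpa using this
      have hbwd : ∀ a, G.Adj y a → a = x ∨ G.Adj x a := by
        intro a ha
        rcases htwin with h | h
        · exact Or.inr (h ▸ ha : a ∈ G.neighborSet x)
        · have : a ∈ insert x (G.neighborSet x) := h ▸ Set.mem_insert_iff.2 (Or.inr ha)
          simpa using this
      exact hdist w hw (le_antisymm (twin_dist_le hG hbwd hwy) (twin_dist_le hG hfwd hwx))
    calc k' ≤ T.card := hcard
      _ ≤ ({x, y} : Finset V).card := Finset.card_le_card hT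
      _ ≤ 2 := Finset.card_insert_le _ _ |>.trans (by simp)
end

section
/- Let G be a connected non-trivial graph of order n and let H = {H_1,...,H_n} be a family of non-trivial graphs. The corona product G⊙H is k-metric dimensional if and only if k = C(H) := min over i and over pairs of distinct vertices x,y of H_i of |(N_{H_i}(x) △ N_{H_i}(y)) ∪ {x,y}|. -/
open SimpleGraph

/-!
In `G ⊙ 𝓗` the base vertex `v` separates the copy of `H v` from the rest of the graph, so
`d(y, t) = d(v, t) + 1` for `y` in that copy and `t` outside it. Hence two vertices `x, y` of
one copy are distinguished exactly by the vertices of `(N(x) △ N(y)) ∪ {x, y}` in that copy,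
so no generator does better than `𝒞(𝓗)`. Any other pair of vertices is distinguished by every
vertex of some whole copy, which has at least `𝒞(𝓗)` vertices, so the whole vertex set is a
`𝒞(𝓗)`-metric generator.
-/

namespace SimpleGraph

variable {U : Type*} {G : SimpleGraph U}

def distinguishers (G : SimpleGraph U) (p q : U) : Set U :=
  {t | G.dist p t ≠ G.dist q t}

lemma distinguishers_comm (p q : U) : G.distinguishers p q = G.distinguishers q p := by
  ext t
  exact ne_comm

variable [Fintype U]

lemma le_ncard_distinguishers_of_kMetricGen {k : ℕ} {S : Set U} (hS : kMetricGen G k S)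
    {p q : U} (hpq : p ≠ q) : k ≤ (G.distinguishers p q).ncard := by
  obtain ⟨T, -, hk, hT⟩ := hS p q hpq
  calc k ≤ T.card := hk
    _ = (T : Set U).ncard := (Set.ncard_coe_finset T).symm
    _ ≤ (G.distinguishers p q).ncard := Set.ncard_le_ncard hT

lemma kMetricGen_univ_of_le_ncard_distinguishers {k : ℕ}
    (h : ∀ p q, p ≠ q → k ≤ (G.distinguishers p q).ncard) : kMetricGen G k Set.univ := by
  classical
  intro p q hpq
  refine ⟨(G.distinguishers p q).toFinset, Set.subset_univ _, ?_, fun t ht => ?_⟩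
  · rw [← Set.ncard_eq_toFinset_card']
    exact h p q hpq
  · exact Set.mem_toFinset.1 ht

lemma kMetricDimensional_iff_isGreatest {k : ℕ} :
    kMetricDimensional G k ↔ IsGreatest {k | ∃ S, kMetricGen G k S} k :=
  Iff.rfl

end SimpleGraph

section CoronaAdj

variable {V : Type*} {W : V → Type*} {G : SimpleGraph V} {H : ∀ v, SimpleGraph (W v)}

@[simp]
lemma corona_adj_inl_inl {a b : V} :
    (corona G H).Adj (.inl a) (.inl b) ↔ G.Adj a b := by
  simp only [corona, fromRel_adj, coronaRel, ne_eq, Sum.inl.injEq]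
  exact ⟨fun h => h.2.elim id .symm, fun h => ⟨h.ne, .inl h⟩⟩

@[simp]
lemma corona_adj_inl_inr {a v : V} {y : W v} :
    (corona G H).Adj (.inl a) (.inr ⟨v, y⟩) ↔ a = v := by
  simp [corona, coronaRel]

@[simp]
lemma corona_adj_inr_inl {a v : V} {y : W v} :
    (corona G H).Adj (.inr ⟨v, y⟩) (.inl a) ↔ a = v := by
  rw [adj_comm, corona_adj_inl_inr]

lemma corona_adj_inr_inr {v : V} {x y : W v} :
    (corona G H).Adj (.inr ⟨v, x⟩) (.inr ⟨v, y⟩) ↔ (H v).Adj x y := by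
  simp only [corona, fromRel_adj, coronaRel]
  constructor
  · rintro ⟨-, ⟨-, h⟩ | ⟨-, h⟩⟩
    exacts [h, h.symm]
  · exact fun h => ⟨by simp [h.ne], .inl ⟨trivial, h⟩⟩

lemma fst_eq_of_corona_adj_inr_inr {z z' : Σ v, W v} (h : (corona G H).Adj (.inr z) (.inr z')) :
    z.1 = z'.1 := by
  rcases h with ⟨-, ⟨h, -⟩ | ⟨h, -⟩⟩
  exacts [h, h.symm]

lemma corona_inr_injective {v : V} :
    Function.Injective (fun y : W v => (.inr ⟨v, y⟩ : V ⊕ Σ v, W v)) :=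
  fun _ _ h => by simpa using h

def coronaInl (G : SimpleGraph V) (H : ∀ v, SimpleGraph (W v)) : G →g corona G H where
  toFun := Sum.inl
  map_rel' := corona_adj_inl_inl.2

end CoronaAdj

section CoronaDist

variable {V : Type*} {W : V → Type*} {G : SimpleGraph V} {H : ∀ v, SimpleGraph (W v)}

lemma corona_connected (hG : G.Connected) : (corona G H).Connected := by
  obtain ⟨a⟩ := hG.nonempty
  refine (connected_iff_exists_forall_reachable _).2 ⟨.inl a, ?_⟩
  rintro (b | ⟨v, y⟩)
  · exact (hG a b).map (coronaInl G H)
  · exact ((hG a v).map (coronaInl G H)).trans (corona_adj_inl_inr.2 rfl).reachable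

/-- Every walk leaving the copy of `H v` passes through the base vertex `v`. -/
lemma dist_inl_add_one_le_length_of_walk_from_copy {p t : V ⊕ Σ v, W v}
    (w : (corona G H).Walk p t) {v : V} {y : W v} (hp : p = .inr ⟨v, y⟩)
    (ht : ∀ y', t ≠ .inr ⟨v, y'⟩) : (corona G H).dist (.inl v) t + 1 ≤ w.length := by
  induction w generalizing v y with
  | nil => exact absurd hp (ht y)
  | cons h w ih =>
    subst hp
    rw [Walk.length_cons]
    rename_i u _
    rcases u with a | ⟨u, y'⟩
    · obtain rfl := corona_adj_inr_inl.1 h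
      exact Nat.succ_le_succ (dist_le w)
    · obtain rfl : v = u := fst_eq_of_corona_adj_inr_inr h
      exact (ih rfl ht).trans (Nat.le_succ _)

lemma corona_dist_inr_left (hG : G.Connected) {v : V} (y : W v)
    {t : V ⊕ Σ v, W v} (ht : ∀ y', t ≠ .inr ⟨v, y'⟩) :
    (corona G H).dist (.inr ⟨v, y⟩) t = (corona G H).dist (.inl v) t + 1 := by
  have hconn := corona_connected (H := H) hG
  obtain ⟨w, hw⟩ := hconn.exists_walk_length_eq_dist (.inr ⟨v, y⟩) t
  have hge := dist_inl_add_one_le_length_of_walk_from_copy w rfl ht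
  have hle := hconn.dist_triangle (u := .inr ⟨v, y⟩) (v := .inl v) (w := t)
  rw [dist_eq_one_iff_adj.2 (corona_adj_inr_inl.2 rfl)] at hle
  omega

lemma corona_dist_inr_right (hG : G.Connected) {v : V} (y : W v)
    {p : V ⊕ Σ v, W v} (hp : ∀ y', p ≠ .inr ⟨v, y'⟩) :
    (corona G H).dist p (.inr ⟨v, y⟩) = (corona G H).dist p (.inl v) + 1 := by
  rw [dist_comm, corona_dist_inr_left hG y hp, dist_comm]

lemma corona_dist_inl_inr_self (v : V) (y : W v) :
    (corona G H).dist (.inl v) (.inr ⟨v, y⟩) = 1 :=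
  dist_eq_one_iff_adj.2 (corona_adj_inl_inr.2 rfl)

open scoped Classical in
lemma corona_dist_inr_inr_self (v : V) (x y : W v) :
    (corona G H).dist (.inr ⟨v, x⟩) (.inr ⟨v, y⟩) =
      if x = y then 0 else if (H v).Adj x y then 1 else 2 := by
  split_ifs with hxy hadj
  · rw [hxy, dist_self]
  · exact dist_eq_one_iff_adj.2 (corona_adj_inr_inr.2 hadj)
  · have hreach : (corona G H).Reachable (.inr ⟨v, x⟩) (.inr ⟨v, y⟩) :=
      (corona_adj_inr_inl.2 rfl).reachable.trans (corona_adj_inl_inr.2 rfl).reachable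
    have hle : (corona G H).dist (.inr ⟨v, x⟩) (.inr ⟨v, y⟩) ≤ 2 :=
      dist_le (.cons (corona_adj_inr_inl.2 rfl) (.cons (corona_adj_inl_inr.2 rfl) .nil))
    have hgt := hreach.one_lt_dist_of_ne_of_not_adj (by simpa using hxy)
      (mt corona_adj_inr_inr.1 hadj)
    omega

lemma corona_distinguishers_inr_inr (hG : G.Connected) {v : V} {x y : W v} (hxy : x ≠ y) :
    (corona G H).distinguishers (.inr ⟨v, x⟩) (.inr ⟨v, y⟩) =
      (fun w => .inr ⟨v, w⟩) ''
        (symmDiff ((H v).neighborSet x) ((H v).neighborSet y) ∪ {x, y}) := by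
  ext t
  by_cases ht : ∃ w, t = .inr ⟨v, w⟩
  · obtain ⟨w, rfl⟩ := ht
    simp only [distinguishers, Set.mem_ofPred_eq, corona_dist_inr_inr_self, Set.mem_image,
      Sum.inr.injEq, Sigma.mk.injEq, heq_eq_eq, true_and, exists_eq_right, Set.mem_union,
      Set.mem_symmDiff, mem_neighborSet, Set.mem_insert_iff, Set.mem_singleton_iff]
    split_ifs <;> grind [(H v).loopless]
  · push Not at ht
    simp only [distinguishers, Set.mem_ofPred_eq, corona_dist_inr_left hG _ ht,
      ne_eq, not_true_eq_false, false_iff, Set.mem_image, not_exists, not_and]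
    rintro w - rfl
    exact ht w rfl

lemma ncard_corona_distinguishers_inr_inr (hG : G.Connected) {v : V} {x y : W v} (hxy : x ≠ y) :
    ((corona G H).distinguishers (.inr ⟨v, x⟩) (.inr ⟨v, y⟩)).ncard =
      (symmDiff ((H v).neighborSet x) ((H v).neighborSet y) ∪ {x, y}).ncard := by
  rw [corona_distinguishers_inr_inr hG hxy, Set.ncard_image_of_injective _ corona_inr_injective]

end CoronaDist

section CoronaDimension

variable {V : Type*} {W : V → Type*} {G : SimpleGraph V} {H : ∀ v, SimpleGraph (W v)}

/-- The paper's `𝒞(𝓗)`. -/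
noncomputable def coronaC (H : ∀ v, SimpleGraph (W v)) : ℕ :=
  sInf {m | ∃ v, ∃ x y : W v, x ≠ y ∧
    (symmDiff ((H v).neighborSet x) ((H v).neighborSet y) ∪ {x, y}).ncard = m}

lemma exists_ncard_eq_coronaC [Nonempty V] [∀ v, Nontrivial (W v)] :
    ∃ v, ∃ x y : W v, x ≠ y ∧
      (symmDiff ((H v).neighborSet x) ((H v).neighborSet y) ∪ {x, y}).ncard = coronaC H := by
  obtain ⟨v⟩ := ‹Nonempty V›
  obtain ⟨x, y, hxy⟩ := exists_pair_ne (W v)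
  exact Nat.sInf_mem (s := {m | ∃ v, ∃ x y : W v, x ≠ y ∧
    (symmDiff ((H v).neighborSet x) ((H v).neighborSet y) ∪ {x, y}).ncard = m})
    ⟨_, v, x, y, hxy, rfl⟩

lemma coronaC_le_ncard {v : V} {x y : W v} (hxy : x ≠ y) :
    coronaC H ≤ (symmDiff ((H v).neighborSet x) ((H v).neighborSet y) ∪ {x, y}).ncard :=
  Nat.sInf_le ⟨v, x, y, hxy, rfl⟩

lemma coronaC_le_card [∀ v, Finite (W v)] [∀ v, Nontrivial (W v)] (v : V) :
    coronaC H ≤ Nat.card (W v) := by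
  obtain ⟨x, y, hxy⟩ := exists_pair_ne (W v)
  exact (coronaC_le_ncard hxy).trans (Set.ncard_le_card _)

variable [Finite V] [∀ v, Finite (W v)] [∀ v, Nontrivial (W v)]

lemma coronaC_le_ncard_distinguishers_of_copy {p q : V ⊕ Σ v, W v} (b : V)
    (h : ∀ w : W b,
      (corona G H).dist p (.inr ⟨b, w⟩) ≠ (corona G H).dist q (.inr ⟨b, w⟩)) :
    coronaC H ≤ ((corona G H).distinguishers p q).ncard := by
  calc coronaC H ≤ Nat.card (W b) := coronaC_le_card b
    _ = (Set.range fun w : W b => (.inr ⟨b, w⟩ : V ⊕ Σ v, W v)).ncard :=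
      (Set.ncard_range_of_injective corona_inr_injective).symm
    _ ≤ ((corona G H).distinguishers p q).ncard :=
      Set.ncard_le_ncard (Set.range_subset_iff.2 h)

lemma coronaC_le_ncard_distinguishers_inl_inl (hG : G.Connected) {a b : V} (hab : a ≠ b) :
    coronaC H ≤ ((corona G H).distinguishers (.inl a) (.inl b)).ncard := by
  refine coronaC_le_ncard_distinguishers_of_copy a fun w => ?_
  rw [corona_dist_inl_inr_self, corona_dist_inr_right hG w (by simp)]
  have := (corona_connected (H := H) hG).pos_dist_of_ne (u := .inl b) (v := .inl a)
    (by simpa using hab.symm)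
  omega

lemma coronaC_le_ncard_distinguishers_inl_inr [Nontrivial V] (hG : G.Connected) (a : V)
    {v : V} (y : W v) :
    coronaC H ≤ ((corona G H).distinguishers (.inl a) (.inr ⟨v, y⟩)).ncard := by
  by_cases hva : v = a
  · subst hva
    obtain ⟨b, hb⟩ := exists_ne v
    refine coronaC_le_ncard_distinguishers_of_copy b fun w => ?_
    rw [corona_dist_inr_right hG w (p := .inl v) (by simp),
      corona_dist_inr_right hG w (p := .inr ⟨v, y⟩) (by simp [hb.symm]),
      corona_dist_inr_left hG y (t := .inl b) (by simp)]
    omega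
  · refine coronaC_le_ncard_distinguishers_of_copy a fun w => ?_
    rw [corona_dist_inl_inr_self,
      corona_dist_inr_left hG y (t := .inr ⟨a, w⟩) (by simp [Ne.symm hva])]
    have := (corona_connected (H := H) hG).pos_dist_of_ne (u := .inl v) (v := .inr ⟨a, w⟩)
      (by simp)
    omega

lemma coronaC_le_ncard_distinguishers_inr_inr (hG : G.Connected) {u v : V} {x : W u} {y : W v}
    (hne : (.inr ⟨u, x⟩ : V ⊕ Σ v, W v) ≠ .inr ⟨v, y⟩) :
    coronaC H ≤ ((corona G H).distinguishers (.inr ⟨u, x⟩) (.inr ⟨v, y⟩)).ncard := by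
  by_cases huv : u = v
  · subst huv
    have hxy : x ≠ y := by rintro rfl; exact hne rfl
    rw [ncard_corona_distinguishers_inr_inr hG hxy]
    exact coronaC_le_ncard hxy
  · refine coronaC_le_ncard_distinguishers_of_copy u fun w => ?_
    rw [corona_dist_inr_left hG y (t := .inr ⟨u, w⟩) (by simp [huv]),
      corona_dist_inr_right hG w (p := .inl v) (by simp), corona_dist_inr_inr_self]
    have := (corona_connected (H := H) hG).pos_dist_of_ne (u := .inl v) (v := .inl u)
      (by simpa using Ne.symm huv)
    split_ifs <;> omega

lemma coronaC_le_ncard_distinguishers [Nontrivial V] (hG : G.Connected)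
    {p q : V ⊕ Σ v, W v} (hpq : p ≠ q) :
    coronaC H ≤ ((corona G H).distinguishers p q).ncard := by
  rcases p with a | ⟨u, x⟩ <;> rcases q with b | ⟨v, y⟩
  · exact coronaC_le_ncard_distinguishers_inl_inl hG (by simpa using hpq)
  · exact coronaC_le_ncard_distinguishers_inl_inr hG a y
  · exact distinguishers_comm (G := corona G H) _ _ ▸
      coronaC_le_ncard_distinguishers_inl_inr hG b x
  · exact coronaC_le_ncard_distinguishers_inr_inr hG hpq

end CoronaDimension

lemma isGreatest_kMetricGen_corona {V : Type*} {W : V → Type*} [Fintype V] [Nontrivial V]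
    [∀ v, Fintype (W v)] [∀ v, Nontrivial (W v)] {G : SimpleGraph V}
    {H : ∀ v, SimpleGraph (W v)} (hG : G.Connected) : IsGreatest {k | ∃ S, kMetricGen (corona G H) k S} (coronaC H) := by
  refine ⟨⟨Set.univ, kMetricGen_univ_of_le_ncard_distinguishers fun _ _ hpq =>
    coronaC_le_ncard_distinguishers hG hpq⟩, ?_⟩
  rintro k ⟨S, hS⟩
  obtain ⟨v, x, y, hxy, hC⟩ := exists_ncard_eq_coronaC (H := H)
  calc k ≤ ((corona G H).distinguishers (.inr ⟨v, x⟩) (.inr ⟨v, y⟩)).ncard :=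
        le_ncard_distinguishers_of_kMetricGen hS (by simpa using hxy)
    _ = coronaC H := by rw [ncard_corona_distinguishers_inr_inr hG hxy, hC]

/-- the corona product is `k`-metric dimensional iff `k = 𝒞(𝓗)`. -/
theorem stmt_3 {V : Type*} [Fintype V] [Nontrivial V] {W : V → Type*} [∀ v, Fintype (W v)]
    [∀ v, Nontrivial (W v)] (G : SimpleGraph V) (hG : G.Connected)
    (H : ∀ v, SimpleGraph (W v)) (k : ℕ) :
    kMetricDimensional (corona G H) k ↔
      k = sInf {m | ∃ v, ∃ x y : W v, x ≠ y ∧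
        (symmDiff ((H v).neighborSet x) ((H v).neighborSet y) ∪ {x, y}).ncard = m} := by
  rw [kMetricDimensional_iff_isGreatest]
  exact ⟨fun h => h.unique (isGreatest_kMetricGen_corona hG),
    fun h => h ▸ isGreatest_kMetricGen_corona hG⟩
end

section
/- Let H be a graph of order n' ≥ 2 with maximum degree Δ(H). The join K_1 + H is k-metric dimensional if and only if k = min{ C(H), n' − Δ(H) + 1 }, where C(H) = min over distinct x,y ∈ V(H) of |(N_H(x) △ N_H(y)) ∪ {x,y}|. -/
open SimpleGraph

/-! In `K₁ + H` all distances are `0`, `1` or `2`. Hence two vertices `x ≠ y` of `H` are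
distinguished exactly by `x`, `y` and the vertices of `N(x) △ N(y)`, and the apex and a vertex
`y` by the apex and the `n' - deg y` non-neighbours of `y` in `H` (`y` among them). A graph is
`k`-metric dimensional precisely when `k` is the least number of vertices distinguishing a pair
of distinct vertices, and minimising over both kinds of pairs gives
`min {𝒞(H), n' - Δ(H) + 1}`. -/

namespace SimpleGraph

variable {V : Type*} (G : SimpleGraph V)

def distinguishingSet (u v : V) : Set V :=
  {w | G.dist u w ≠ G.dist v w}

lemma distinguishingSet_comm (u v : V) : G.distinguishingSet u v = G.distinguishingSet v u := by
  ext w; exact ne_comm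

def distinguishingCards : Set ℕ :=
  {m | ∃ u v, u ≠ v ∧ (G.distinguishingSet u v).ncard = m}

variable [Fintype V]

lemma exists_kMetricGen_iff (k : ℕ) :
    (∃ S, kMetricGen G k S) ↔ ∀ u v, u ≠ v → k ≤ (G.distinguishingSet u v).ncard := by
  classical
  constructor
  · rintro ⟨S, hS⟩ u v huv
    obtain ⟨T, -, hkT, hT⟩ := hS u v huv
    calc k ≤ T.card := hkT
      _ = (T : Set V).ncard := (Set.ncard_coe_finset T).symm
      _ ≤ (G.distinguishingSet u v).ncard := Set.ncard_le_ncard (fun w hw => hT w hw)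
  · intro h
    refine ⟨Set.univ, fun u v huv => ⟨(G.distinguishingSet u v).toFinset, by simp, ?_, ?_⟩⟩
    · rw [← Set.ncard_eq_toFinset_card']
      exact h u v huv
    · intro w hw
      simpa [distinguishingSet] using (Set.mem_toFinset.mp hw)

lemma kMetricDimensional_iff_isLeast (k : ℕ) :
    kMetricDimensional G k ↔ IsLeast G.distinguishingCards k := by
  have hlower : ∀ k', (∃ S, kMetricGen G k' S) ↔ k' ∈ lowerBounds G.distinguishingCards := by
    intro k'
    simp only [exists_kMetricGen_iff, lowerBounds, distinguishingCards, Set.mem_ofPred_eq]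
    grind
  simp only [kMetricDimensional, hlower]
  constructor
  · rintro ⟨hk, hmax⟩
    obtain ⟨m, hm, hmk⟩ : ∃ m ∈ G.distinguishingCards, m < k + 1 := by
      by_contra! h
      exact Nat.not_succ_le_self k (hmax (k + 1) h)
    exact ⟨le_antisymm (by omega) (hk hm) ▸ hm, hk⟩
  · rintro ⟨hk, hlb⟩
    exact ⟨hlb, fun k' hk' => hk' hk⟩

end SimpleGraph

section Join

variable {U : Type*} (H : SimpleGraph U)

lemma K1join_adj_none_some (u : U) : (K1join H).Adj none (some u) := by
  simp [K1join]

lemma K1join_adj_some_some (a b : U) : (K1join H).Adj (some a) (some b) ↔ H.Adj a b := by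
  simp only [K1join, fromRel_adj]
  exact ⟨fun ⟨_, h⟩ => h.elim id (H.adj_symm ·), fun h => ⟨by simpa using h.ne, Or.inl h⟩⟩

lemma K1join_dist_none_some (u : U) : (K1join H).dist none (some u) = 1 :=
  dist_eq_one_iff_adj.mpr (K1join_adj_none_some H u)

lemma K1join_dist_some_some [DecidableEq U] [DecidableRel H.Adj] (a b : U) :
    (K1join H).dist (some a) (some b) = if a = b then 0 else if H.Adj a b then 1 else 2 := by
  split_ifs with hab hadj
  · simp [hab]
  · exact dist_eq_one_iff_adj.mpr ((K1join_adj_some_some H a b).mpr hadj)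
  · let w : (K1join H).Walk (some a) (some b) :=
      .cons (K1join_adj_none_some H a).symm (.cons (K1join_adj_none_some H b) .nil)
    have hle : (K1join H).dist (some a) (some b) ≤ 2 := dist_le w
    have hne0 : (K1join H).dist (some a) (some b) ≠ 0 :=
      (Reachable.pos_dist_of_ne ⟨w⟩ (by simpa using hab)).ne'
    have hne1 : (K1join H).dist (some a) (some b) ≠ 1 := by
      rwa [Ne, dist_eq_one_iff_adj, K1join_adj_some_some]
    omega

lemma K1join_distinguishingSet_none_some (y : U) :
    (K1join H).distinguishingSet none (some y) = insert none (some '' (H.neighborSet y)ᶜ) := by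
  classical
  ext (_ | z)
  · simp [distinguishingSet, dist_comm, K1join_dist_none_some]
  · simp only [distinguishingSet, Set.mem_ofPred_eq, K1join_dist_none_some, K1join_dist_some_some]
    by_cases hyz : y = z <;> by_cases hadj : H.Adj y z <;> simp [hyz, hadj]

lemma K1join_distinguishingSet_some_some {x y : U} (hxy : x ≠ y) :
    (K1join H).distinguishingSet (some x) (some y) =
      some '' (symmDiff (H.neighborSet x) (H.neighborSet y) ∪ {x, y}) := by
  classical
  ext (_ | z)
  · simp [distinguishingSet, dist_comm, K1join_dist_none_some]
  · simp only [distinguishingSet, Set.mem_ofPred_eq, K1join_dist_some_some]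
    by_cases hx : x = z <;> by_cases hy : y = z <;> by_cases hxz : H.Adj x z <;>
      by_cases hyz : H.Adj y z <;> simp_all [Set.mem_symmDiff, eq_comm]

lemma K1join_ncard_distinguishingSet_none_some [Fintype U] [DecidableRel H.Adj] (y : U) :
    ((K1join H).distinguishingSet none (some y)).ncard = Fintype.card U - H.degree y + 1 := by
  rw [K1join_distinguishingSet_none_some, Set.ncard_insert_of_notMem (by simp),
    Set.ncard_image_of_injective _ (Option.some_injective U), Set.ncard_compl,
    Set.ncard_eq_toFinset_card', Set.toFinset_card, card_neighborSet_eq_degree,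
    Nat.card_eq_fintype_card]

lemma K1join_ncard_distinguishingSet_some_some {x y : U} (hxy : x ≠ y) :
    ((K1join H).distinguishingSet (some x) (some y)).ncard =
      (symmDiff (H.neighborSet x) (H.neighborSet y) ∪ {x, y}).ncard := by
  rw [K1join_distinguishingSet_some_some H hxy,
    Set.ncard_image_of_injective _ (Option.some_injective U)]

lemma K1join_distinguishingCards [Fintype U] [DecidableRel H.Adj] :
    (K1join H).distinguishingCards =
      {m | ∃ x y : U, x ≠ y ∧ (symmDiff (H.neighborSet x) (H.neighborSet y) ∪ {x, y}).ncard = m}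
        ∪ Set.range fun y => Fintype.card U - H.degree y + 1 := by
  ext m
  simp only [distinguishingCards, Set.mem_union, Set.mem_ofPred_eq, Set.mem_range]
  constructor
  · rintro ⟨_ | x, _ | y, hxy, rfl⟩
    · exact absurd rfl hxy
    · exact .inr ⟨y, (K1join_ncard_distinguishingSet_none_some H y).symm⟩
    · rw [distinguishingSet_comm]
      exact .inr ⟨x, (K1join_ncard_distinguishingSet_none_some H x).symm⟩
    · have hxy : x ≠ y := by simpa using hxy
      exact .inl ⟨x, y, hxy, (K1join_ncard_distinguishingSet_some_some H hxy).symm⟩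
  · rintro (⟨x, y, hxy, rfl⟩ | ⟨y, rfl⟩)
    · exact ⟨some x, some y, by simpa using hxy, K1join_ncard_distinguishingSet_some_some H hxy⟩
    · exact ⟨none, some y, by simp, K1join_ncard_distinguishingSet_none_some H y⟩

end Join

lemma isLeast_CC {U : Type*} [Nontrivial U] (H : SimpleGraph U) :
    IsLeast {m | ∃ x y : U, x ≠ y ∧
      (symmDiff (H.neighborSet x) (H.neighborSet y) ∪ {x, y}).ncard = m} (CC H) := by
  obtain ⟨a, b, hab⟩ := exists_pair_ne U
  exact ⟨Nat.sInf_mem ⟨_, a, b, hab, rfl⟩, fun _ hm => Nat.sInf_le hm⟩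

lemma isLeast_card_sub_degree_add_one {U : Type*} [Fintype U] [Nonempty U]
    (H : SimpleGraph U) [DecidableRel H.Adj] :
    IsLeast (Set.range fun y => Fintype.card U - H.degree y + 1)
      (Fintype.card U - H.maxDegree + 1) := by
  obtain ⟨y, hy⟩ := H.exists_maximal_degree_vertex
  refine ⟨⟨y, by rw [hy]⟩, ?_⟩
  rintro _ ⟨z, rfl⟩
  exact Nat.add_le_add_right (Nat.sub_le_sub_left (H.degree_le_maxDegree z) _) 1

/-- `K₁ + H` is `k`-metric dimensional iff `k = min{𝒞(H), n' - Δ(H) + 1}`. -/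
theorem stmt_5 {U : Type*} [Fintype U] (H : SimpleGraph U) [DecidableRel H.Adj]
    (hn : 2 ≤ Fintype.card U) (k : ℕ) :
    kMetricDimensional (K1join H) k ↔
      k = min (CC H) (Fintype.card U - H.maxDegree + 1) := by
  have : Nontrivial U := Fintype.one_lt_card_iff_nontrivial.mp hn
  have hleast : IsLeast (K1join H).distinguishingCards
      (min (CC H) (Fintype.card U - H.maxDegree + 1)) := by
    rw [K1join_distinguishingCards]
    exact (isLeast_CC H).union (isLeast_card_sub_degree_add_one H)
  rw [kMetricDimensional_iff_isLeast]
  exact ⟨fun hk => hk.unique hleast, fun hk => hk ▸ hleast⟩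
end

section
/- Let H be a non-trivial graph of order n' with maximum degree Δ(H). If K_1 + H is (n' − Δ(H) + 1)-metric dimensional, then the vertex of K_1 belongs to every (n' − Δ(H) + 1)-metric basis of K_1 + H. -/
open SimpleGraph

lemma K1join_adj_none {U : Type*} (H : SimpleGraph U) (t : U) :
    (K1join H).Adj none (some t) := by
  simp [K1join, SimpleGraph.fromRel_adj]

lemma K1join_adj_some {U : Type*} (H : SimpleGraph U) {a b : U} :
    (K1join H).Adj (some a) (some b) ↔ H.Adj a b := by
  simp only [K1join, SimpleGraph.fromRel_adj]
  constructor
  · rintro ⟨hne, h | h⟩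
    · exact h
    · exact h.symm
  · intro h
    exact ⟨by simpa using h.ne, Or.inl h⟩

lemma K1join_dist_none {U : Type*} (H : SimpleGraph U) (t : U) :
    (K1join H).dist none (some t) = 1 :=
  SimpleGraph.dist_eq_one_iff_adj.mpr (K1join_adj_none H t)

lemma K1join_dist_some {U : Type*} (H : SimpleGraph U) {a b : U} (hne : a ≠ b)
    (hna : ¬ H.Adj a b) : (K1join H).dist (some a) (some b) = 2 := by
  have hr : (K1join H).Reachable (some a) (some b) :=
    ⟨Walk.cons ((K1join_adj_none H a).symm) ((K1join_adj_none H b).toWalk)⟩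
  have h2 : (K1join H).dist (some a) (some b) ≤ 2 := by
    have := SimpleGraph.dist_le
      (Walk.cons ((K1join_adj_none H a).symm) ((K1join_adj_none H b).toWalk))
    simpa using this
  have h0 : (K1join H).dist (some a) (some b) ≠ 0 := by
    rw [SimpleGraph.dist_ne_zero_iff_ne_and_reachable]
    exact ⟨by simpa using hne, hr⟩
  have h1 : (K1join H).dist (some a) (some b) ≠ 1 := by
    intro hd
    exact hna ((K1join_adj_some H).mp (SimpleGraph.dist_eq_one_iff_adj.mp hd))
  omega

/-- if `K₁ + H` is `(n' - Δ(H) + 1)`-metric dimensional, then the vertex of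
`K₁` belongs to every `(n' - Δ(H) + 1)`-metric basis of `K₁ + H`. -/
theorem stmt_10 {U : Type*} [Fintype U] [Nontrivial U] (H : SimpleGraph U)
    [DecidableRel H.Adj]
    (h : kMetricDimensional (K1join H) (Fintype.card U - H.maxDegree + 1)) :
    ∀ B : Finset (Option U),
      kMetricBasis (K1join H) (Fintype.card U - H.maxDegree + 1) B → none ∈ B := by
  classical
  intro B hB
  obtain ⟨u, hu⟩ := H.exists_maximal_degree_vertex
  by_contra hnone
  obtain ⟨T, hTB, hTcard, hTd⟩ := hB.1 none (some u) (by simp)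
  set D : Finset (Option U) :=
    (Finset.univ.filter (fun t => ¬ H.Adj u t)).image some with hD
  have hTD : T ⊆ D := by
    intro w hw
    match w with
    | none => exact absurd (hTB hw) hnone
    | some t =>
      simp only [hD, Finset.mem_image, Finset.mem_filter, Finset.mem_univ, true_and]
      refine ⟨t, ?_, rfl⟩
      intro hadj
      apply hTd (some t) hw
      rw [K1join_dist_none]
      exact (SimpleGraph.dist_eq_one_iff_adj.mpr ((K1join_adj_some H).mpr hadj)).symm
  have hDcard : D.card = Fintype.card U - H.degree u := by
    rw [hD, Finset.card_image_of_injective _ (Option.some_injective U)]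
    have := Finset.card_filter_add_card_filter_not
      (s := (Finset.univ : Finset U)) (p := fun t => H.Adj u t)
    have hdeg : (Finset.univ.filter (fun t => H.Adj u t)).card = H.degree u := by
      rw [SimpleGraph.degree, SimpleGraph.neighborFinset_eq_filter]
    simp only [Finset.card_univ] at this
    omega
  have hle : T.card ≤ D.card := Finset.card_le_card hTD
  rw [hDcard, ← hu] at hle
  have hlt := H.maxDegree_lt_card_verts
  omega
end
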